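/- arXiv:1105.2748 — 2 statements merged into one kernel-verified Lean document; each statement's English description precedes it below -/
import Mathlib

section
/- Let N > 2 and let a, c : ℝ^N → ℝ be locally Hölder continuous with some exponent α ∈ (0,1), with a(x) > 0 and c(x) > 0 for all x ∈ ℝ^N. Define φ(r) = max_{|x|=r} a(x), assume ∫₀^∞ r·φ(r) dr < ∞, and assume additionally that lim_{|x|→∞} |x|^μ · φ(|x|) exists and is finite for some μ ∈ (2, N). Then the positive solution u of −Δu + c(x)·u^{−1}·|∇u|² = a(x) on ℝ^N constructed as the locally uniform C² limit of the solutions on the balls B_k (which vanishes at infinity) satisfies u(x) = O(|x|^{2−μ}) as |x| → ∞, i.e. there exist constants C > 0 and R > 0 such that u(x) ≤ C·|x|^{2−μ} whenever |x| ≥ R. -/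
/-!
Comparison with the barrier `w = C ‖x‖ ^ (2 - μ)`, whose Laplacian is
`-C (μ - 2) (N - μ) ‖x‖ ^ (-μ)`. The equation gives `-Δu ≤ a ≤ φ(‖x‖) ≤ M ‖x‖ ^ (-μ)` for
large `‖x‖`, so for `C` large `Δw < Δu` outside a ball `B_R`, and `u ≤ w` on `∂B_R`. Since
`u - w` tends to `0` at infinity, a positive value of `u - w` outside `B_R` would force an
interior maximum of `u - w`, where `Δu ≤ Δw`.
-/

open Set Filter MeasureTheory

/-- The Laplacian of `u : ℝ^N → ℝ`: the sum of its second partial derivatives. -/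
noncomputable def lap {N : ℕ} (u : EuclideanSpace ℝ (Fin N) → ℝ)
    (x : EuclideanSpace ℝ (Fin N)) : ℝ :=
  ∑ i : Fin N, fderiv ℝ (fun y => fderiv ℝ u y (EuclideanSpace.single i 1)) x
    (EuclideanSpace.single i 1)

/-- `f` is locally α-Hölder continuous on `ℝ^N`. -/
def LocHolder {N : ℕ} {F : Type*} [PseudoEMetricSpace F] (α : NNReal)
    (f : EuclideanSpace ℝ (Fin N) → F) : Prop :=
  ∀ K : Set (EuclideanSpace ℝ (Fin N)), IsCompact K → ∃ C : NNReal, HolderOnWith C α f K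

open Topology

lemma deriv_deriv_nonpos_of_isLocalMax {f : ℝ → ℝ} {x₀ : ℝ} (hmax : IsLocalMax f x₀)
    (hc : ContinuousAt f x₀) : deriv (deriv f) x₀ ≤ 0 := by
  by_contra! hpos
  -- by the second-derivative test `x₀` would also be a local minimum
  have hconst : f =ᶠ[𝓝 x₀] fun _ => f x₀ :=
    ((isLocalMin_of_deriv_deriv_pos hpos hmax.deriv_eq_zero hc).and hmax).mono
      fun _ h => le_antisymm h.2 h.1
  have hderiv : deriv f =ᶠ[𝓝 x₀] fun _ => 0 :=
    hconst.eventuallyEq_nhds.mono fun _ h => by rw [h.deriv_eq, deriv_const]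
  rw [hderiv.deriv_eq, deriv_const] at hpos
  exact lt_irrefl _ hpos

lemma exists_le_mul_rpow_neg_of_tendsto {φ : ℝ → ℝ} {μ L : ℝ}
    (hL : Tendsto (fun r => r ^ μ * φ r) atTop (𝓝 L)) :
    ∃ M, ∀ᶠ r in atTop, φ r ≤ M * r ^ (-μ) := by
  refine ⟨L + 1, ?_⟩
  filter_upwards [hL.eventually (eventually_lt_nhds (lt_add_one L)),
    eventually_gt_atTop 0] with r hr hr0
  rw [Real.rpow_neg hr0.le, ← div_eq_mul_inv, le_div_iff₀ (by positivity)]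
  linarith

section SecondDerivative

variable {E : Type*} [NormedAddCommGroup E] [NormedSpace ℝ E] {g : E → ℝ} {x : E}

lemma ContDiffAt.eventually_differentiableAt (hg : ContDiffAt ℝ 2 g x) :
    ∀ᶠ y in 𝓝 x, DifferentiableAt ℝ g y :=
  (hg.eventually (by simp)).mono fun _ hy => hy.differentiableAt (by norm_num)

lemma ContDiffAt.differentiableAt_fderiv_apply (hg : ContDiffAt ℝ 2 g x) (e : E) :
    DifferentiableAt ℝ (fun y => fderiv ℝ g y e) x :=
  ((hg.fderiv_right (m := 1) (by norm_num)).differentiableAt (by norm_num)).clm_apply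
    (differentiableAt_const e)

lemma ContDiffAt.deriv_deriv_comp_line (hg : ContDiffAt ℝ 2 g x) (e : E) :
    deriv (deriv fun t : ℝ => g (x + t • e)) 0 = fderiv ℝ (fun y => fderiv ℝ g y e) x e := by
  have hline (t : ℝ) : HasDerivAt (fun t : ℝ => x + t • e) e t := by
    simpa using ((hasDerivAt_id t).smul_const e).const_add x
  have hderiv : deriv (fun t : ℝ => g (x + t • e)) =ᶠ[𝓝 0]
      fun t => fderiv ℝ g (x + t • e) e := by
    have hcont : Tendsto (fun t : ℝ => x + t • e) (𝓝 0) (𝓝 x) := by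
      simpa using (hline 0).continuousAt.tendsto
    filter_upwards [hcont.eventually hg.eventually_differentiableAt] with t ht
    exact (ht.hasFDerivAt.comp_hasDerivAt t (hline t)).deriv
  rw [hderiv.deriv_eq]
  exact ((hg.differentiableAt_fderiv_apply e).hasFDerivAt.comp_hasDerivAt_of_eq 0 (hline 0)
    (by simp)).deriv

end SecondDerivative

lemma hasFDerivAt_norm_rpow_of_ne_zero {E : Type*} [NormedAddCommGroup E]
    [InnerProductSpace ℝ E] {x : E} (hx : x ≠ 0) (s : ℝ) :
    HasFDerivAt (fun y => ‖y‖ ^ s) ((s * ‖x‖ ^ (s - 2)) • innerSL ℝ x) x := by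
  have hsq (y : E) (t : ℝ) : (‖y‖ ^ 2) ^ t = ‖y‖ ^ (2 * t) := by
    rw [← Real.rpow_natCast, ← Real.rpow_mul (norm_nonneg y)]
    norm_num
  have h := (hasStrictFDerivAt_norm_sq x).hasFDerivAt.rpow_const (p := s / 2)
    (Or.inl (by positivity))
  rw [← Nat.cast_smul_eq_nsmul ℝ, smul_smul] at h
  simp only [hsq] at h
  convert h using 2 <;> ring_nf

section Exterior

variable {E : Type*} [NormedAddCommGroup E]

lemma exists_isLocalMax_of_tendsto_cocompact {v : E → ℝ} {R : ℝ}
    (hv : ContinuousOn v {x | R ≤ ‖x‖}) (hlim : Tendsto v (cocompact E) (𝓝 0))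
    (hbdry : ∀ x, ‖x‖ = R → v x ≤ 0) {x₁ : E} (hx₁ : R ≤ ‖x₁‖) (hpos : 0 < v x₁) :
    ∃ x₀, R < ‖x₀‖ ∧ IsLocalMax v x₀ := by
  have hclosed : IsClosed {x : E | R ≤ ‖x‖} := isClosed_le continuous_const continuous_norm
  obtain ⟨x₀, hx₀, hmax⟩ := hv.exists_isMaxOn' hclosed hx₁ <|
    ((hlim.eventually (gt_mem_nhds hpos)).filter_mono inf_le_left).mono fun _ h => h.le
  have hR : R < ‖x₀‖ := lt_of_le_of_ne hx₀ fun h =>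
    ((hbdry x₀ h.symm).trans_lt hpos).not_ge (hmax hx₁)
  exact ⟨x₀, hR, hmax.isLocalMax <| mem_of_superset
    ((isOpen_lt continuous_const continuous_norm).mem_nhds hR) fun _ (h : R < _) => h.le⟩

lemma tendsto_const_mul_norm_rpow_cocompact [ProperSpace E] (C : ℝ) {s : ℝ} (hs : s < 0) :
    Tendsto (fun x : E => C * ‖x‖ ^ s) (cocompact E) (𝓝 0) := by
  simpa using
    ((tendsto_rpow_neg_atTop (neg_pos.2 hs)).comp tendsto_norm_cocompact_atTop).const_mul C

end Exterior

section Laplacian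

variable {N : ℕ} {u w : EuclideanSpace ℝ (Fin N) → ℝ} {x : EuclideanSpace ℝ (Fin N)}

lemma IsLocalMax.lap_nonpos (hu : ContDiffAt ℝ 2 u x) (hmax : IsLocalMax u x) :
    lap u x ≤ 0 := by
  refine Finset.sum_nonpos fun i _ => ?_
  set e := EuclideanSpace.single i (1 : ℝ)
  have hx : x + (0 : ℝ) • e = x := by simp
  have hline : ContinuousAt (fun t : ℝ => x + t • e) 0 := by fun_prop
  have hmax' : IsLocalMax u (x + (0 : ℝ) • e) := by rwa [hx]
  rw [← hu.deriv_deriv_comp_line]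
  exact deriv_deriv_nonpos_of_isLocalMax
    (hmax'.comp_continuous (g := fun t : ℝ => x + t • e) hline)
    (hu.continuousAt.comp_of_eq hline hx)

lemma ContDiffAt.lap_sub (hu : ContDiffAt ℝ 2 u x) (hw : ContDiffAt ℝ 2 w x) :
    lap (fun y => u y - w y) x = lap u x - lap w x := by
  rw [lap, lap, lap, ← Finset.sum_sub_distrib]
  refine Finset.sum_congr rfl fun i _ => ?_
  set e := EuclideanSpace.single i (1 : ℝ)
  have hfderiv : (fun y => fderiv ℝ (fun z => u z - w z) y e) =ᶠ[𝓝 x]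
      fun y => fderiv ℝ u y e - fderiv ℝ w y e := by
    filter_upwards [hu.eventually_differentiableAt, hw.eventually_differentiableAt]
      with y hyu hyw
    rw [fderiv_fun_sub hyu hyw]
    rfl
  rw [hfderiv.fderiv_eq, fderiv_fun_sub (hu.differentiableAt_fderiv_apply e)
    (hw.differentiableAt_fderiv_apply e)]
  rfl

lemma lap_le_lap_of_isLocalMax_sub (hu : ContDiffAt ℝ 2 u x) (hw : ContDiffAt ℝ 2 w x)
    (hmax : IsLocalMax (fun y => u y - w y) x) : lap u x ≤ lap w x := by
  have := hmax.lap_nonpos (hu.sub hw)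
  rwa [hu.lap_sub hw, sub_nonpos] at this

theorem le_of_lap_lt_lap_of_tendsto_cocompact {R : ℝ}
    (hu : ∀ x, R < ‖x‖ → ContDiffAt ℝ 2 u x) (hw : ∀ x, R < ‖x‖ → ContDiffAt ℝ 2 w x)
    (hcont : ContinuousOn (fun x => u x - w x) {x | R ≤ ‖x‖})
    (hlap : ∀ x, R < ‖x‖ → lap w x < lap u x) (hbdry : ∀ x, ‖x‖ = R → u x ≤ w x)
    (hlim : Tendsto (fun x => u x - w x) (cocompact _) (𝓝 0)) (hx : R ≤ ‖x‖) :
    u x ≤ w x := by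
  by_contra! hlt
  obtain ⟨x₀, hx₀, hmax⟩ := exists_isLocalMax_of_tendsto_cocompact hcont hlim
    (fun y hy => sub_nonpos.2 (hbdry y hy)) hx (sub_pos.2 hlt)
  exact (hlap x₀ hx₀).not_ge (lap_le_lap_of_isLocalMax_sub (hu x₀ hx₀) (hw x₀ hx₀) hmax)

lemma lap_eq_sum_of_hasFDerivAt
    {w' : EuclideanSpace ℝ (Fin N) → EuclideanSpace ℝ (Fin N) →L[ℝ] ℝ}
    {w'' : Fin N → EuclideanSpace ℝ (Fin N) →L[ℝ] ℝ}
    (hw' : ∀ᶠ y in 𝓝 x, HasFDerivAt w (w' y) y)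
    (hw'' : ∀ i, HasFDerivAt (fun y => w' y (EuclideanSpace.single i 1)) (w'' i) x) :
    lap w x = ∑ i, w'' i (EuclideanSpace.single i 1) := by
  refine Finset.sum_congr rfl fun i _ => ?_
  have hfderiv : (fun y => fderiv ℝ w y (EuclideanSpace.single i 1)) =ᶠ[𝓝 x]
      fun y => w' y (EuclideanSpace.single i 1) :=
    hw'.mono fun y hy => by dsimp only; rw [hy.fderiv]
  rw [hfderiv.fderiv_eq, (hw'' i).fderiv]

lemma lap_const_mul_norm_rpow (C s : ℝ) (hx : x ≠ 0) :
    lap (fun y => C * ‖y‖ ^ s) x = C * s * (s + N - 2) * ‖x‖ ^ (s - 2) := by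
  have hw' : ∀ᶠ y in 𝓝 x, HasFDerivAt (fun y => C * ‖y‖ ^ s)
      (C • (s * ‖y‖ ^ (s - 2)) • innerSL ℝ y) y :=
    (eventually_ne_nhds hx).mono fun y hy => (hasFDerivAt_norm_rpow_of_ne_zero hy s).const_mul C
  have hw'_apply (i : Fin N) :
      (fun y => (C • (s * ‖y‖ ^ (s - 2)) • innerSL ℝ y) (EuclideanSpace.single i 1))
        = fun y => C * s * (‖y‖ ^ (s - 2) * EuclideanSpace.proj i y) := by
    funext y
    simp only [smul_apply, coe_innerSL_apply, EuclideanSpace.inner_single_right,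
      Real.ringHom_apply, one_mul, smul_eq_mul, PiLp.proj_apply]
    ring
  have hw'' (i : Fin N) := ((hasFDerivAt_norm_rpow_of_ne_zero hx (s - 2)).fun_mul
    (EuclideanSpace.proj i).hasFDerivAt).const_mul (C * s)
  rw [lap_eq_sum_of_hasFDerivAt hw' fun i => by rw [hw'_apply]; exact hw'' i]
  simp only [PiLp.proj_apply, smul_add, add_apply, smul_apply, PiLp.single_eq_same, smul_eq_mul,
    mul_one, coe_innerSL_apply, EuclideanSpace.inner_single_right, Real.ringHom_apply, one_mul]
  have hnorm_sq : ∑ i, x i * x i = ‖x‖ ^ 2 := by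
    rw [EuclideanSpace.real_norm_sq_eq]
    simp [sq]
  have hpow : ‖x‖ ^ (s - 2 - 2) * ‖x‖ ^ 2 = ‖x‖ ^ (s - 2) := by
    rw [← Real.rpow_natCast, ← Real.rpow_add (norm_pos_iff.2 hx)]
    norm_num
  have hsecond : ∑ i, C * s * (x i * ((s - 2) * ‖x‖ ^ (s - 2 - 2) * x i))
      = C * s * (s - 2) * (‖x‖ ^ (s - 2 - 2) * ∑ i, x i * x i) := by
    rw [Finset.mul_sum, Finset.mul_sum]
    exact Finset.sum_congr rfl fun i _ => by ring
  rw [Finset.sum_add_distrib, hsecond, hnorm_sq, hpow, Finset.sum_const, Finset.card_univ,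
    Fintype.card_fin, nsmul_eq_mul]
  ring

lemma lap_const_mul_norm_rpow_two_sub (C μ : ℝ) (hx : x ≠ 0) :
    lap (fun y => C * ‖y‖ ^ (2 - μ)) x = -(C * ((μ - 2) * (N - μ))) * ‖x‖ ^ (-μ) := by
  rw [lap_const_mul_norm_rpow C (2 - μ) hx, show 2 - μ - 2 = -μ by ring]
  ring

theorem exists_le_const_mul_norm_rpow_of_lap_ge {μ M R : ℝ} (hμ2 : 2 < μ) (hμN : μ < N)
    (hu : ContDiff ℝ 2 u) (hlim : Tendsto u (cocompact _) (𝓝 0)) (hR : 0 < R)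
    (hlap : ∀ x, R ≤ ‖x‖ → -(M * ‖x‖ ^ (-μ)) ≤ lap u x) :
    ∃ C > 0, ∀ x, R ≤ ‖x‖ → u x ≤ C * ‖x‖ ^ (2 - μ) := by
  obtain ⟨B, hB⟩ := (isCompact_sphere (0 : EuclideanSpace ℝ (Fin N)) R).exists_bound_of_continuousOn
    hu.continuous.continuousOn
  have hK : 0 < (μ - 2) * (N - μ) := mul_pos (by linarith) (by linarith)
  set C := max ((|M| + 1) / ((μ - 2) * (N - μ))) (B * R ^ (μ - 2))
  have hCK : |M| + 1 ≤ C * ((μ - 2) * (N - μ)) := (div_le_iff₀ hK).1 (le_max_left _ _)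
  have hw (y : EuclideanSpace ℝ (Fin N)) (hy : R ≤ ‖y‖) :
      ContDiffAt ℝ 2 (fun x => C * ‖x‖ ^ (2 - μ)) y :=
    contDiffAt_const.mul ((contDiffAt_norm ℝ (norm_pos_iff.1 (hR.trans_le hy))).rpow_const_of_ne
      (hR.trans_le hy).ne')
  have hlim' : Tendsto (fun x => u x - C * ‖x‖ ^ (2 - μ)) (cocompact _) (𝓝 0) := by
    simpa using hlim.sub (tendsto_const_mul_norm_rpow_cocompact C (s := 2 - μ) (by linarith))
  refine ⟨C, lt_max_of_lt_left (by positivity), fun x hx =>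
    le_of_lap_lt_lap_of_tendsto_cocompact (fun y _ => hu.contDiffAt) (fun y hy => hw y hy.le)
      (hu.continuous.continuousOn.sub fun y hy => (hw y hy).continuousAt.continuousWithinAt)
      (fun y hy => ?_) (fun y hy => ?_) hlim' hx⟩
  · have hpow : 0 < ‖y‖ ^ (-μ) := Real.rpow_pos_of_pos (hR.trans hy) _
    rw [lap_const_mul_norm_rpow_two_sub C μ (norm_pos_iff.1 (hR.trans hy))]
    calc -(C * ((μ - 2) * (N - μ))) * ‖y‖ ^ (-μ) ≤ -(|M| + 1) * ‖y‖ ^ (-μ) := by gcongr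
      _ < -(M * ‖y‖ ^ (-μ)) := by nlinarith [le_abs_self M]
      _ ≤ lap u y := hlap y hy.le
  · calc u y ≤ B := (le_abs_self _).trans (hB y (mem_sphere_zero_iff_norm.2 hy))
      _ = B * R ^ (μ - 2) * R ^ (2 - μ) := by rw [mul_assoc, ← Real.rpow_add hR]; simp
      _ ≤ C * ‖y‖ ^ (2 - μ) := by rw [hy]; gcongr; exact le_max_right _ _

lemma neg_le_lap_of_eq {a c : EuclideanSpace ℝ (Fin N) → ℝ} (hc : 0 ≤ c x) (hu : 0 < u x)
    (heq : -lap u x + c x * (u x)⁻¹ * ‖gradient u x‖ ^ 2 = a x) : -a x ≤ lap u x := by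
  have : 0 ≤ c x * (u x)⁻¹ * ‖gradient u x‖ ^ 2 := by positivity
  linarith

end Laplacian

theorem singular_elliptic_asymptotic_decay_general
    {N : ℕ}
    (a c : EuclideanSpace ℝ (Fin N) → ℝ)
    (hcpos : ∀ x, 0 < c x)
    (φ : ℝ → ℝ)
    (hφ : ∀ r : ℝ, 0 ≤ r →
      IsGreatest (a '' Metric.sphere (0 : EuclideanSpace ℝ (Fin N)) r) (φ r))
    (μ : ℝ) (hμ2 : 2 < μ) (hμN : μ < N)
    (L : ℝ) (hL : Tendsto (fun r : ℝ => r ^ μ * φ r) atTop (nhds L))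
    -- `u` is the solution constructed as the limit of the `u_k`: it is their pointwise limit,
    -- it is positive, solves the equation on `ℝ^N` and vanishes at infinity.
    (u : EuclideanSpace ℝ (Fin N) → ℝ)
    (hreg : ContDiff ℝ 2 u)
    (hupos : ∀ x, 0 < u x)
    (huvanish : Tendsto u (cocompact (EuclideanSpace ℝ (Fin N))) (nhds 0))
    (hueq : ∀ x, -lap u x + c x * (u x)⁻¹ * ‖gradient u x‖ ^ 2 = a x) :
    ∃ C > (0 : ℝ), ∃ R > (0 : ℝ), ∀ x : EuclideanSpace ℝ (Fin N),
      R ≤ ‖x‖ → u x ≤ C * ‖x‖ ^ (2 - μ) := by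
  obtain ⟨M, hφM⟩ := exists_le_mul_rpow_neg_of_tendsto hL
  obtain ⟨R, hRφ⟩ := eventually_atTop.1 (hφM.and (eventually_gt_atTop 0))
  have hR : 0 < R := (hRφ R le_rfl).2
  have hlap (x : EuclideanSpace ℝ (Fin N)) (hx : R ≤ ‖x‖) : -(M * ‖x‖ ^ (-μ)) ≤ lap u x :=
    calc -(M * ‖x‖ ^ (-μ)) ≤ -φ ‖x‖ := neg_le_neg (hRφ ‖x‖ hx).1
      _ ≤ -a x := neg_le_neg ((hφ ‖x‖ (norm_nonneg x)).2 ⟨x, by simp, rfl⟩)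
      _ ≤ lap u x := neg_le_lap_of_eq (hcpos x).le (hupos x) (hueq x)
  obtain ⟨C, hC, hdecay⟩ :=
    exists_le_const_mul_norm_rpow_of_lap_ge hμ2 hμN hreg huvanish hR hlap
  exact ⟨C, hC, R, hR, hdecay⟩

/-- **Asymptotic behavior.** Under the hypotheses of the existence theorem on `ℝ^N`, if
moreover `lim_{|x|→∞} |x|^μ φ(|x|)` exists and is finite for some `μ ∈ (2, N)`, then the
positive solution `u` (constructed as the pointwise limit of the solutions `u_k` of the
problems on the balls `B_k`, extended by `0` outside `B_k`, which vanishes at infinity)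
satisfies `u(x) = O(|x|^{2-μ})` as `|x| → ∞`. -/
theorem singular_elliptic_asymptotic_decay
    {N : ℕ} (hN : 2 < N) (α : NNReal) (hα0 : 0 < α) (hα1 : α < 1)
    (a c : EuclideanSpace ℝ (Fin N) → ℝ)
    (ha : LocHolder α a) (hc : LocHolder α c)
    (hapos : ∀ x, 0 < a x) (hcpos : ∀ x, 0 < c x)
    (φ : ℝ → ℝ)
    (hφ : ∀ r : ℝ, 0 ≤ r →
      IsGreatest (a '' Metric.sphere (0 : EuclideanSpace ℝ (Fin N)) r) (φ r))
    (hint : IntegrableOn (fun r : ℝ => r * φ r) (Set.Ioi 0))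
    (μ : ℝ) (hμ2 : 2 < μ) (hμN : μ < N)
    (L : ℝ) (hL : Tendsto (fun r : ℝ => r ^ μ * φ r) atTop (nhds L))
    -- `u_k` solves the problem on the ball `B_k`, vanishes on `∂B_k`, and is extended by `0`
    -- outside `B_k`.
    (uk : ℕ → EuclideanSpace ℝ (Fin N) → ℝ)
    (huk : ∀ k : ℕ, 0 < k →
      ContinuousOn (uk k) (closure (Metric.ball (0 : EuclideanSpace ℝ (Fin N)) k)) ∧
      ContDiffOn ℝ 2 (uk k) (Metric.ball (0 : EuclideanSpace ℝ (Fin N)) k) ∧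
      (∀ x ∈ Metric.ball (0 : EuclideanSpace ℝ (Fin N)) (k : ℝ), 0 < uk k x) ∧
      (∀ x ∉ Metric.ball (0 : EuclideanSpace ℝ (Fin N)) (k : ℝ), uk k x = 0) ∧
      (∀ x ∈ Metric.ball (0 : EuclideanSpace ℝ (Fin N)) (k : ℝ),
        -lap (uk k) x + c x * (uk k x)⁻¹ * ‖gradient (uk k) x‖ ^ 2 = a x))
    -- `u` is the solution constructed as the limit of the `u_k`: it is their pointwise limit,
    -- it is positive, solves the equation on `ℝ^N` and vanishes at infinity.
    (u : EuclideanSpace ℝ (Fin N) → ℝ)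
    (hconv : ∀ x, Tendsto (fun k => uk k x) atTop (nhds (u x)))
    (hreg : ContDiff ℝ 2 u)
    (hupos : ∀ x, 0 < u x)
    (huvanish : Tendsto u (cocompact (EuclideanSpace ℝ (Fin N))) (nhds 0))
    (hueq : ∀ x, -lap u x + c x * (u x)⁻¹ * ‖gradient u x‖ ^ 2 = a x) :
    ∃ C > (0 : ℝ), ∃ R > (0 : ℝ), ∀ x : EuclideanSpace ℝ (Fin N),
      R ≤ ‖x‖ → u x ≤ C * ‖x‖ ^ (2 - μ) :=
  singular_elliptic_asymptotic_decay_general a c hcpos φ hφ μ hμ2 hμN L hL u hreg hupos huvanish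
    hueq
end

section
/- Let Ω ⊂ ℝ^N be a bounded domain, let a, c : Ω̄ → ℝ be continuous with a > 0 and c > 0 on Ω̄, and set m₂ := min_{x∈Ω̄} a(x) and M₁ := max_{x∈Ω̄} c(x). Let λ₁ > 0 and let φ₁ ∈ C²(Ω̄) satisfy φ₁ > 0 in Ω, φ₁ = 0 on ∂Ω, and −Δφ₁ = λ₁·φ₁ in Ω. Let ε ∈ (0,1) and let σ₁ satisfy 0 < σ₁ ≤ min{ m₂ / (2·λ₁·max_{x∈Ω̄} φ₁(x)² + 4·M₁·max_{x∈Ω̄} |∇φ₁(x)|²), 1 }. Then the function u̲ := σ₁·φ₁² + ε satisfies u̲ ≥ ε > 0 on Ω̄, u̲ = ε on ∂Ω, and −Δu̲(x) + c(x)·u̲(x)^{−1}·|∇u̲(x)|² ≤ a(x) for every x ∈ Ω (i.e. u̲ is a sub solution of the truncated problem −Δu + c(x)u^{−1}|∇u|² = a(x) in Ω, u = ε on ∂Ω). -/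
open Set Filter

section NormedSpace

variable {E : Type*} [NormedAddCommGroup E] [NormedSpace ℝ E] {φ : E → ℝ} {x : E}

theorem fderiv_const_mul_sq_add_const (σ ε : ℝ) (hφ : DifferentiableAt ℝ φ x) :
    fderiv ℝ (fun z => σ * φ z ^ 2 + ε) x = (2 * σ * φ x) • fderiv ℝ φ x := by
  have h : HasFDerivAt φ (fderiv ℝ φ x) x := hφ.hasFDerivAt
  refine (((h.pow 2).const_mul σ).add_const ε).fderiv.trans ?_
  ext v
  simp only [Nat.add_one_sub_one, pow_one, nsmul_eq_mul, Nat.cast_ofNat, smul_apply,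
    smul_eq_mul]
  ring

theorem fderiv_fderiv_const_mul_sq_add_const_apply (σ ε : ℝ) (hφ : ContDiffAt ℝ 2 φ x)
    (v : E) :
    fderiv ℝ (fun y => fderiv ℝ (fun z => σ * φ z ^ 2 + ε) y v) x v
      = 2 * σ * fderiv ℝ φ x v ^ 2
        + 2 * σ * φ x * fderiv ℝ (fun y => fderiv ℝ φ y v) x v := by
  have hφd : DifferentiableAt ℝ φ x := hφ.differentiableAt two_ne_zero
  have hφ' : DifferentiableAt ℝ (fun y => fderiv ℝ φ y v) x :=
    ((hφ.fderiv_right (m := 1) le_rfl).differentiableAt one_ne_zero).clm_apply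
      (differentiableAt_const v)
  have hderiv : (fun y => fderiv ℝ (fun z => σ * φ z ^ 2 + ε) y v)
      =ᶠ[nhds x] fun y => 2 * σ * (φ y * fderiv ℝ φ y v) := by
    filter_upwards [hφ.eventually (by simp)] with y hy
    rw [fderiv_const_mul_sq_add_const σ ε (hy.differentiableAt two_ne_zero)]
    simp only [smul_apply, smul_eq_mul]
    ring
  rw [hderiv.fderiv_eq, fderiv_const_mul (a := fun y => φ y * fderiv ℝ φ y v) (hφd.mul hφ'),
    fderiv_fun_mul hφd hφ']
  simp only [smul_add, add_apply, smul_apply, smul_eq_mul]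
  ring

end NormedSpace

theorem gradient_const_mul_sq_add_const {E : Type*} [NormedAddCommGroup E]
    [InnerProductSpace ℝ E] [CompleteSpace E] {φ : E → ℝ} {x : E} (σ ε : ℝ)
    (hφ : DifferentiableAt ℝ φ x) :
    gradient (fun z => σ * φ z ^ 2 + ε) x = (2 * σ * φ x) • gradient φ x := by
  rw [gradient, fderiv_const_mul_sq_add_const σ ε hφ, map_smul, gradient]

theorem sum_fderiv_single_sq_eq_norm_gradient_sq {N : ℕ} (f : EuclideanSpace ℝ (Fin N) → ℝ)
    (x : EuclideanSpace ℝ (Fin N)) :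
    ∑ i, fderiv ℝ f x (EuclideanSpace.single i 1) ^ 2 = ‖gradient f x‖ ^ 2 := by
  have hpartial (i : Fin N) :
      fderiv ℝ f x (EuclideanSpace.single i 1) = gradient f x i := by
    rw [gradient, ← InnerProductSpace.toDual_symm_apply, EuclideanSpace.inner_single_right]
    simp
  simp_rw [hpartial, EuclideanSpace.norm_sq_eq, Real.norm_eq_abs, sq_abs]

theorem lap_const_mul_sq_add_const {N : ℕ} {φ : EuclideanSpace ℝ (Fin N) → ℝ}
    {x : EuclideanSpace ℝ (Fin N)} (σ ε : ℝ) (hφ : ContDiffAt ℝ 2 φ x) :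
    lap (fun y => σ * φ y ^ 2 + ε) x
      = 2 * σ * ‖gradient φ x‖ ^ 2 + 2 * σ * φ x * lap φ x := by
  simp only [lap, fderiv_fderiv_const_mul_sq_add_const_apply σ ε hφ, Finset.sum_add_distrib,
    ← Finset.mul_sum, sum_fderiv_single_sq_eq_norm_gradient_sq]

theorem mul_inv_mul_sq_le {σ ε c p G : ℝ} (hσ : 0 ≤ σ) (hε : 0 < ε) (hc : 0 ≤ c)
    (hG : 0 ≤ G) :
    c * (σ * p ^ 2 + ε)⁻¹ * ((2 * σ * p) ^ 2 * G) ≤ 4 * σ * (c * G) := by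
  have hu : 0 < σ * p ^ 2 + ε := by positivity
  rw [mul_comm c, mul_assoc, inv_mul_le_iff₀ hu]
  have : 0 ≤ 4 * σ * (c * G) * ε := by positivity
  nlinarith

theorem subsolution_truncated_problem_general
    {N : ℕ} (Ω : Set (EuclideanSpace ℝ (Fin N)))
    (hΩo : IsOpen Ω)
    (a c : EuclideanSpace ℝ (Fin N) → ℝ)
    (hapos : ∀ x ∈ closure Ω, 0 < a x) (hcpos : ∀ x ∈ closure Ω, 0 < c x)
    (m₂ M₁ : ℝ)
    (hm₂ : IsLeast (a '' closure Ω) m₂)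
    (hM₁ : IsGreatest (c '' closure Ω) M₁)
    (lam : ℝ) (hlam : 0 < lam)
    (φ₁ : EuclideanSpace ℝ (Fin N) → ℝ)
    (hφreg : ContDiffOn ℝ 2 φ₁ (closure Ω))
    (hφbdry : ∀ x ∈ frontier Ω, φ₁ x = 0)
    (hφeig : ∀ x ∈ Ω, -lap φ₁ x = lam * φ₁ x)
    (Mφ Mg : ℝ)
    (hMφ : IsGreatest ((fun x => φ₁ x ^ 2) '' closure Ω) Mφ)
    (hMg : IsGreatest ((fun x => ‖gradient φ₁ x‖ ^ 2) '' closure Ω) Mg)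
    (ε : ℝ) (hε : ε ∈ Set.Ioo (0 : ℝ) 1)
    (σ₁ : ℝ) (hσpos : 0 < σ₁)
    (hσle : σ₁ ≤ min (m₂ / (2 * lam * Mφ + 4 * M₁ * Mg)) 1) :
    (∀ x ∈ closure Ω, ε ≤ σ₁ * φ₁ x ^ 2 + ε) ∧ 0 < ε ∧
    (∀ x ∈ frontier Ω, σ₁ * φ₁ x ^ 2 + ε = ε) ∧
    (∀ x ∈ Ω,
      -lap (fun y => σ₁ * φ₁ y ^ 2 + ε) x
        + c x * (σ₁ * φ₁ x ^ 2 + ε)⁻¹ *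
          ‖gradient (fun y => σ₁ * φ₁ y ^ 2 + ε) x‖ ^ 2 ≤ a x) := by
  obtain ⟨hε₀, -⟩ := hε
  refine ⟨fun x _ => le_add_of_nonneg_left (by positivity), hε₀,
    fun x hx => by simp [hφbdry x hx], fun x hx => ?_⟩
  have hxΩ : x ∈ closure Ω := subset_closure hx
  have hφx : ContDiffAt ℝ 2 φ₁ x :=
    hφreg.contDiffAt (mem_of_superset (hΩo.mem_nhds hx) subset_closure)
  have hlap : lap φ₁ x = -(lam * φ₁ x) := by linarith [hφeig x hx]
  rw [lap_const_mul_sq_add_const σ₁ ε hφx, hlap,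
    gradient_const_mul_sq_add_const σ₁ ε (hφx.differentiableAt two_ne_zero),
    norm_smul, mul_pow, Real.norm_eq_abs, sq_abs]
  set G := ‖gradient φ₁ x‖ ^ 2
  have hG₀ : 0 ≤ G := sq_nonneg _
  have hφM : φ₁ x ^ 2 ≤ Mφ := hMφ.2 ⟨x, hxΩ, rfl⟩
  have hGM : G ≤ Mg := hMg.2 ⟨x, hxΩ, rfl⟩
  have hcM : c x ≤ M₁ := hM₁.2 ⟨x, hxΩ, rfl⟩
  have hc₀ : 0 ≤ c x := (hcpos x hxΩ).le
  have hm₂₀ : 0 ≤ m₂ := by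
    obtain ⟨y, hy, rfl⟩ := hm₂.1
    exact (hapos y hy).le
  have hD₀ : 0 ≤ 2 * lam * Mφ + 4 * M₁ * Mg := by
    nlinarith [sq_nonneg (φ₁ x)]
  calc _ ≤ 2 * σ₁ * (lam * φ₁ x ^ 2) + 4 * σ₁ * (c x * G) := by
        linarith [mul_inv_mul_sq_le (p := φ₁ x) hσpos.le hε₀ hc₀ hG₀, mul_nonneg hσpos.le hG₀]
    _ ≤ 2 * σ₁ * (lam * Mφ) + 4 * σ₁ * (M₁ * Mg) := by
        gcongr
        exact hc₀.trans hcM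
    _ = σ₁ * (2 * lam * Mφ + 4 * M₁ * Mg) := by ring
    _ ≤ m₂ := mul_le_of_le_div₀ hm₂₀ hD₀ (hσle.trans (min_le_left _ _))
    _ ≤ a x := hm₂.2 ⟨x, hxΩ, rfl⟩

/-- **Sub solution of the truncated problem.** With `m₂ = min_{Ω̄} a`, `M₁ = max_{Ω̄} c`,
`φ₁ > 0` the first eigenfunction (`-Δφ₁ = λ₁ φ₁` in `Ω`, `φ₁ = 0` on `∂Ω`), `ε ∈ (0,1)` and
`0 < σ₁ ≤ min { m₂ / (2 λ₁ max φ₁² + 4 M₁ max |∇φ₁|²), 1 }`, the function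
`u̲ = σ₁ φ₁² + ε` satisfies `u̲ ≥ ε > 0` on `Ω̄`, `u̲ = ε` on `∂Ω`, and
`-Δu̲ + c(x) u̲⁻¹ |∇u̲|² ≤ a(x)` in `Ω`. -/
theorem subsolution_truncated_problem
    {N : ℕ} (Ω : Set (EuclideanSpace ℝ (Fin N)))
    (hΩo : IsOpen Ω) (hΩconn : IsConnected Ω) (hΩb : Bornology.IsBounded Ω)
    (a c : EuclideanSpace ℝ (Fin N) → ℝ)
    (hacont : ContinuousOn a (closure Ω)) (hccont : ContinuousOn c (closure Ω))
    (hapos : ∀ x ∈ closure Ω, 0 < a x) (hcpos : ∀ x ∈ closure Ω, 0 < c x)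
    (m₂ M₁ : ℝ)
    (hm₂ : IsLeast (a '' closure Ω) m₂)
    (hM₁ : IsGreatest (c '' closure Ω) M₁)
    (lam : ℝ) (hlam : 0 < lam)
    (φ₁ : EuclideanSpace ℝ (Fin N) → ℝ)
    (hφreg : ContDiffOn ℝ 2 φ₁ (closure Ω))
    (hφpos : ∀ x ∈ Ω, 0 < φ₁ x)
    (hφbdry : ∀ x ∈ frontier Ω, φ₁ x = 0)
    (hφeig : ∀ x ∈ Ω, -lap φ₁ x = lam * φ₁ x)
    (Mφ Mg : ℝ)
    (hMφ : IsGreatest ((fun x => φ₁ x ^ 2) '' closure Ω) Mφ)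
    (hMg : IsGreatest ((fun x => ‖gradient φ₁ x‖ ^ 2) '' closure Ω) Mg)
    (ε : ℝ) (hε : ε ∈ Set.Ioo (0 : ℝ) 1)
    (σ₁ : ℝ) (hσpos : 0 < σ₁)
    (hσle : σ₁ ≤ min (m₂ / (2 * lam * Mφ + 4 * M₁ * Mg)) 1) :
    (∀ x ∈ closure Ω, ε ≤ σ₁ * φ₁ x ^ 2 + ε) ∧ 0 < ε ∧
    (∀ x ∈ frontier Ω, σ₁ * φ₁ x ^ 2 + ε = ε) ∧
    (∀ x ∈ Ω,
      -lap (fun y => σ₁ * φ₁ y ^ 2 + ε) x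
        + c x * (σ₁ * φ₁ x ^ 2 + ε)⁻¹ *
          ‖gradient (fun y => σ₁ * φ₁ y ^ 2 + ε) x‖ ^ 2 ≤ a x) :=
  subsolution_truncated_problem_general Ω hΩo a c hapos hcpos m₂ M₁ hm₂ hM₁ lam hlam φ₁ hφreg hφbdry
    hφeig Mφ Mg hMφ hMg ε hε σ₁ hσpos hσle
end
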